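/- There exist two standard deviations σ_1 ≠ σ_2, a parameter θ, cut-offs α = (α_1, α_2) with 0 < α_1 < α_2 < 1, and a positive weight vector ρ such that no single probability vector π makes the p-hacking mixture density Σ_j π_j φ_{[c_j(σ_i), c_{j−1}(σ_i))}(x; θ, σ_i) equal to the publication bias density with weights ρ simultaneously for both i = 1 and i = 2. That is, when σ varies across studies, the publication bias model with fixed ρ is not in general reproducible by a p-hacking model with fixed π. -/

import Mathlib

open MeasureTheory Set

/-- The density of `N(θ, σ²)`. -/
noncomputable def normpdf (θ σ x : ℝ) : ℝ :=
  (σ * Real.sqrt (2 * Real.pi))⁻¹ * Real.exp (-(x - θ) ^ 2 / (2 * σ ^ 2))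

/-- The standard normal CDF `Φ`. -/
noncomputable def Phi (x : ℝ) : ℝ := ∫ t in Set.Iic x, normpdf 0 1 t

lemma normpdf_pos {θ σ : ℝ} (hσ : 0 < σ) (x : ℝ) : 0 < normpdf θ σ x := by
  unfold normpdf
  have h2π : 0 < Real.sqrt (2 * Real.pi) := Real.sqrt_pos.mpr (by positivity)
  positivity

lemma normpdf_eq_gaussian : normpdf 0 1 = ProbabilityTheory.gaussianPDFReal 0 1 := by
  funext x
  simp [normpdf, ProbabilityTheory.gaussianPDFReal]

lemma integrable_normpdf : Integrable (normpdf 0 1) := by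
  rw [normpdf_eq_gaussian]; exact ProbabilityTheory.integrable_gaussianPDFReal 0 1

lemma integral_normpdf : ∫ x, normpdf 0 1 x = 1 := by
  rw [normpdf_eq_gaussian]
  exact ProbabilityTheory.integral_gaussianPDFReal_eq_one 0 one_ne_zero

lemma Phi_nonneg (x : ℝ) : 0 ≤ Phi x :=
  setIntegral_nonneg measurableSet_Iic fun t _ => (normpdf_pos one_pos t).le

lemma Phi_le_one (x : ℝ) : Phi x ≤ 1 := by
  rw [← integral_normpdf]
  exact setIntegral_le_integral integrable_normpdf
    (ae_of_all _ fun t => (normpdf_pos one_pos t).le)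

lemma Ioc_normpdf_pos {a b : ℝ} (h : a < b) : 0 < ∫ t in Ioc a b, normpdf 0 1 t := by
  rw [← intervalIntegral.integral_of_le h.le]
  exact intervalIntegral.intervalIntegral_pos_of_pos
    (integrable_normpdf.intervalIntegrable) (fun x => normpdf_pos one_pos x) h

lemma Phi_strictMono : StrictMono Phi := by
  intro a b hab
  have hunion : Iic a ∪ Ioc a b = Iic b := Iic_union_Ioc_eq_Iic hab.le
  have h : Phi b = Phi a + ∫ t in Ioc a b, normpdf 0 1 t := by
    unfold Phi
    rw [← setIntegral_union (Iic_disjoint_Ioc le_rfl) measurableSet_Ioc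
      integrable_normpdf.integrableOn integrable_normpdf.integrableOn, hunion]
  have := Ioc_normpdf_pos hab
  linarith

lemma Phi_pos (x : ℝ) : 0 < Phi x :=
  lt_of_le_of_lt (Phi_nonneg (x - 1)) (Phi_strictMono (by linarith))

lemma Phi_lt_one (x : ℝ) : Phi x < 1 :=
  lt_of_lt_of_le (Phi_strictMono (show x < x + 1 by linarith)) (Phi_le_one _)

lemma integral_Ioi_normpdf (a : ℝ) : ∫ t in Ioi a, normpdf 0 1 t = 1 - Phi a := by
  have h := integral_add_compl (s := Iic a) measurableSet_Iic integrable_normpdf (f := normpdf 0 1)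
  rw [compl_Iic, integral_normpdf] at h
  unfold Phi; linarith

lemma integral_Ici_normpdf (a : ℝ) : ∫ t in Ici a, normpdf 0 1 t = 1 - Phi a := by
  rw [← integral_Ioi_normpdf a]
  exact (setIntegral_congr_set Ioi_ae_eq_Ici).symm

lemma integral_Iio_normpdf (a : ℝ) : ∫ t in Iio a, normpdf 0 1 t = Phi a :=
  setIntegral_congr_set Iio_ae_eq_Iic

lemma Phi_zero : Phi 0 = 1 / 2 := by
  have heven : ∀ x : ℝ, normpdf 0 1 (-x) = normpdf 0 1 x := by
    intro x; unfold normpdf; ring_nf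
  have h1 : Phi 0 = ∫ t in Ioi (0:ℝ), normpdf 0 1 t := by
    unfold Phi
    have h2 := integral_comp_neg_Iic (0:ℝ) (normpdf 0 1)
    rw [neg_zero] at h2
    rw [← h2]
    exact setIntegral_congr_fun measurableSet_Iic fun x _ => (heven x).symm
  rw [integral_Ioi_normpdf] at h1
  linarith

lemma cov {σ : ℝ} (hσ : 0 < σ) (θ : ℝ) (s : Set ℝ) :
    ∫ x in s, normpdf θ σ x = ∫ u in (fun u => σ * u + θ) ⁻¹' s, normpdf 0 1 u := by
  have hσ0 : σ ≠ 0 := hσ.ne'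
  have A : MeasurableEmbedding (fun u : ℝ => σ * u + θ) := by
    have := ((Homeomorph.mulLeft₀ σ hσ0).trans
      (Homeomorph.addRight θ)).isClosedEmbedding.measurableEmbedding
    convert this using 2
    rfl
  have hmap : Measure.map (fun u : ℝ => σ * u + θ) volume
      = ENNReal.ofReal σ⁻¹ • volume := by
    have h1 : (fun u : ℝ => σ * u + θ) = (fun x : ℝ => x + θ) ∘ (fun u : ℝ => σ * u) := rfl
    rw [h1, ← Measure.map_map (measurable_add_const θ) (measurable_const_mul σ),
      Real.map_volume_mul_left hσ0, Measure.map_smul, map_add_right_eq_self,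
      abs_of_pos (inv_pos.mpr hσ)]
  have key := A.setIntegral_map (μ := volume) (normpdf θ σ) s
  rw [hmap] at key
  rw [Measure.restrict_smul, integral_smul_measure] at key
  have hcomp : ∀ u : ℝ, normpdf θ σ (σ * u + θ) = σ⁻¹ * normpdf 0 1 u := by
    intro u
    unfold normpdf
    have harg : -(σ * u + θ - θ) ^ 2 / (2 * σ ^ 2) = -(u - 0) ^ 2 / (2 * 1 ^ 2) := by
      field_simp; ring
    rw [harg]
    field_simp
  simp only [hcomp] at key
  rw [integral_const_mul, ENNReal.toReal_ofReal (inv_pos.mpr hσ).le, smul_eq_mul] at key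
  have := key
  field_simp at this ⊢
  linarith [this]

lemma S_eq_Ici {σ : ℝ} (hσ : 0 < σ) :
    {x : ℝ | 1 - Phi (x / σ) ∈ Set.Ioc 0 (1/2)} = Ici 0 := by
  ext x
  simp only [mem_setOf_eq, mem_Ioc, mem_Ici, sub_nonneg, sub_le_iff_le_add, sub_pos]
  constructor
  · rintro ⟨-, h2⟩
    have : Phi 0 ≤ Phi (x / σ) := by rw [Phi_zero]; linarith
    have hx : (0:ℝ) ≤ x / σ := Phi_strictMono.le_iff_le.mp this
    by_contra hc
    push_neg at hc
    exact absurd (div_neg_of_neg_of_pos hc hσ) (not_lt.mpr hx)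
  · intro hx
    have hx' : (0:ℝ) ≤ x / σ := div_nonneg hx hσ.le
    have h1 : Phi 0 ≤ Phi (x / σ) := Phi_strictMono.le_iff_le.mpr hx'
    rw [Phi_zero] at h1
    exact ⟨Phi_lt_one _, by linarith⟩

lemma S_eq_Iio {σ : ℝ} (hσ : 0 < σ) :
    {x : ℝ | 1 - Phi (x / σ) ∈ Set.Ioc (1 - Phi (-1)) 1} = Iio (-σ) := by
  ext x
  simp only [mem_setOf_eq, mem_Ioc, mem_Iio]
  constructor
  · rintro ⟨h1, -⟩
    have : Phi (x / σ) < Phi (-1) := by linarith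
    have hx : x / σ < -1 := Phi_strictMono.lt_iff_lt.mp this
    have := (div_lt_iff₀ hσ).mp hx
    linarith
  · intro hx
    have hx' : x / σ < -1 := (div_lt_iff₀ hσ).mpr (by linarith)
    have h1 : Phi (x / σ) < Phi (-1) := Phi_strictMono hx'
    exact ⟨by linarith, by linarith [Phi_pos (x / σ)]⟩

lemma m1_eq {σ : ℝ} (hσ : 0 < σ) :
    ∫ x in Ici (0:ℝ), normpdf 1 σ x = 1 - Phi (-1/σ) := by
  rw [cov hσ]
  have hpre : (fun u : ℝ => σ * u + 1) ⁻¹' Ici 0 = Ici (-1/σ) := by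
    ext u
    simp only [mem_preimage, mem_Ici]
    rw [div_le_iff₀ hσ]
    constructor <;> intro h <;> nlinarith
  rw [hpre, integral_Ici_normpdf]

lemma m3_eq {σ : ℝ} (hσ : 0 < σ) :
    ∫ x in Iio (-σ), normpdf 1 σ x = Phi (-1 - 1/σ) := by
  rw [cov hσ]
  have hpre : (fun u : ℝ => σ * u + 1) ⁻¹' Iio (-σ) = Iio (-1 - 1/σ) := by
    ext u
    simp only [mem_preimage, mem_Iio]
    have h2 : u < -1 - 1/σ ↔ u * σ < (-1 - 1/σ) * σ := (mul_lt_mul_iff_of_pos_right hσ).symm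
    have h3 : (-1 - 1/σ) * σ = -σ - 1 := by field_simp
    rw [h2, h3]
    exact ⟨fun h => by nlinarith, fun h => by nlinarith⟩
  rw [hpre, integral_Iio_normpdf]

/-- When `σ` varies across studies, the fixed effects publication bias model with a
fixed weight vector `ρ` cannot in general be reproduced by a p-hacking model with a
single probability vector `π`: there are `σ₁ ≠ σ₂`, `θ`, cut-offs `0 < α₁ < α₂ < 1`
and positive weights `ρ` such that no probability vector `π` makes the p-hacking
mixture equal to the publication bias density simultaneously for both `σ₁` and
`σ₂`. -/
theorem stmt11 :
    ∃ (σ₁ σ₂ θ α₁ α₂ ρ₁ ρ₂ ρ₃ : ℝ),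
      0 < σ₁ ∧ 0 < σ₂ ∧ σ₁ ≠ σ₂ ∧ 0 < α₁ ∧ α₁ < α₂ ∧ α₂ < 1 ∧
      0 < ρ₁ ∧ 0 < ρ₂ ∧ 0 < ρ₃ ∧
      let S : ℝ → ℝ → ℝ → Set ℝ := fun σ a b => {x | 1 - Phi (x / σ) ∈ Set.Ioc a b}
      let m : ℝ → ℝ → ℝ → ℝ := fun σ a b => ∫ x in S σ a b, normpdf θ σ x
      let T : ℝ → ℝ → ℝ → ℝ → ℝ :=
        fun σ a b x => Set.indicator (S σ a b) (normpdf θ σ) x / m σ a b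
      let Zρ : ℝ → ℝ := fun σ => ρ₁ * m σ 0 α₁ + ρ₂ * m σ α₁ α₂ + ρ₃ * m σ α₂ 1
      let pb : ℝ → ℝ → ℝ := fun σ x =>
        ρ₁ * m σ 0 α₁ / Zρ σ * T σ 0 α₁ x + ρ₂ * m σ α₁ α₂ / Zρ σ * T σ α₁ α₂ x +
          ρ₃ * m σ α₂ 1 / Zρ σ * T σ α₂ 1 x
      ¬ ∃ π₁ π₂ π₃ : ℝ, 0 ≤ π₁ ∧ 0 ≤ π₂ ∧ 0 ≤ π₃ ∧ π₁ + π₂ + π₃ = 1 ∧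
        (∀ x, π₁ * T σ₁ 0 α₁ x + π₂ * T σ₁ α₁ α₂ x + π₃ * T σ₁ α₂ 1 x = pb σ₁ x) ∧
        (∀ x, π₁ * T σ₂ 0 α₁ x + π₂ * T σ₂ α₁ α₂ x + π₃ * T σ₂ α₂ 1 x = pb σ₂ x) := by
  have hPhi1 : Phi (-1) < 1/2 := by
    have h := Phi_strictMono (show (-1:ℝ) < 0 by norm_num)
    rw [Phi_zero] at h; linarith
  refine ⟨1, 2, 1, 1/2, 1 - Phi (-1), 1, 1, 1, one_pos, two_pos, by norm_num,
    by norm_num, by linarith, by linarith [Phi_pos (-1)], one_pos, one_pos, one_pos, ?_⟩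
  intro S m T Zρ pb
  rintro ⟨π₁, π₂, π₃, hπ₁, hπ₂, hπ₃, hsum, H1, H2⟩
  have key : ∀ σ : ℝ, 0 < σ →
      (∀ x, π₁ * T σ 0 (1/2) x + π₂ * T σ (1/2) (1 - Phi (-1)) x
        + π₃ * T σ (1 - Phi (-1)) 1 x = pb σ x) →
      ∃ Z : ℝ, 0 < Z ∧ π₁ * Z = 1 - Phi (-1/σ) ∧ π₃ * Z = Phi (-1 - 1/σ) := by
    intro σ hσ H
    simp only [pb, T, m, Zρ, S, one_mul] at H
    simp only [S_eq_Ici hσ, S_eq_Iio hσ, m1_eq hσ, m3_eq hσ] at H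
    set m2 : ℝ := ∫ x in {x : ℝ | 1 - Phi (x / σ) ∈ Set.Ioc (1/2) (1 - Phi (-1))},
      normpdf 1 σ x with hm2def
    have hm1pos : 0 < 1 - Phi (-1/σ) := by linarith [Phi_lt_one (-1/σ)]
    have hm3pos : 0 < Phi (-1 - 1/σ) := Phi_pos _
    have hm2nonneg : 0 ≤ m2 := integral_nonneg fun x => (normpdf_pos hσ x).le
    set Z : ℝ := (1 - Phi (-1/σ)) + m2 + Phi (-1 - 1/σ) with hZdef
    have hZpos : 0 < Z := by positivity
    refine ⟨Z, hZpos, ?_, ?_⟩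
    · have h0 := H 0
      have e1 : Set.indicator (Ici (0:ℝ)) (normpdf 1 σ) 0 = normpdf 1 σ 0 :=
        Set.indicator_of_mem (by simp) _
      have e2 : Set.indicator {x : ℝ | 1 - Phi (x / σ) ∈ Set.Ioc (1/2) (1 - Phi (-1))}
          (normpdf 1 σ) 0 = 0 := by
        apply Set.indicator_of_notMem
        simp only [mem_setOf_eq, mem_Ioc, zero_div, Phi_zero, not_and]
        intro h; linarith
      have e3 : Set.indicator (Iio (-σ)) (normpdf 1 σ) 0 = 0 := by
        apply Set.indicator_of_notMem
        simp only [mem_Iio, not_lt]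
        linarith
      rw [e1, e2, e3] at h0
      simp only [zero_div, mul_zero, add_zero] at h0
      have hp : normpdf 1 σ 0 / (1 - Phi (-1/σ)) ≠ 0 :=
        div_ne_zero (normpdf_pos hσ 0).ne' hm1pos.ne'
      have h0' : π₁ = (1 - Phi (-1/σ)) / Z := mul_right_cancel₀ hp h0
      rw [h0']
      field_simp
    · have h0 := H (-(2*σ))
      have e1 : Set.indicator (Ici (0:ℝ)) (normpdf 1 σ) (-(2*σ)) = 0 := by
        apply Set.indicator_of_notMem
        simp only [mem_Ici, not_le]
        linarith
      have e2 : Set.indicator {x : ℝ | 1 - Phi (x / σ) ∈ Set.Ioc (1/2) (1 - Phi (-1))}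
          (normpdf 1 σ) (-(2*σ)) = 0 := by
        apply Set.indicator_of_notMem
        have hdiv : -(2*σ) / σ = -2 := by field_simp
        have hmono : Phi (-2) < Phi (-1) := Phi_strictMono (by norm_num)
        simp only [mem_setOf_eq, mem_Ioc, hdiv, not_and]
        intro h; intro h2; linarith
      have e3 : Set.indicator (Iio (-σ)) (normpdf 1 σ) (-(2*σ)) = normpdf 1 σ (-(2*σ)) :=
        Set.indicator_of_mem (by simp only [mem_Iio]; linarith) _
      rw [e1, e2, e3] at h0
      simp only [zero_div, mul_zero, add_zero, zero_add] at h0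
      have hp : normpdf 1 σ (-(2*σ)) / Phi (-1 - 1/σ) ≠ 0 :=
        div_ne_zero (normpdf_pos hσ _).ne' hm3pos.ne'
      have h0' : π₃ = Phi (-1 - 1/σ) / Z := mul_right_cancel₀ hp h0
      rw [h0']
      field_simp
  obtain ⟨Z₁, hZ₁, hA₁, hB₁⟩ := key 1 one_pos H1
  obtain ⟨Z₂, hZ₂, hA₂, hB₂⟩ := key 2 two_pos H2
  have h1 : Phi (-1/1) < Phi (-1/2) := Phi_strictMono (by norm_num)
  have h2 : Phi (-1 - 1/1) < Phi (-1 - 1/2) := Phi_strictMono (by norm_num)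
  have hA2pos : 0 < 1 - Phi (-1/2) := by linarith [Phi_lt_one (-1/2)]
  have hB1pos : 0 < Phi (-1 - 1/1) := Phi_pos _
  have heq : (1 - Phi (-1/1)) * Phi (-1 - 1/2) = Phi (-1 - 1/1) * (1 - Phi (-1/2)) := by
    rw [← hA₁, ← hB₂, ← hB₁, ← hA₂]; ring
  nlinarith [heq, h1, h2, hA2pos, hB1pos]
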